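/- arXiv:1901.02686 — 10 statements merged into one kernel-verified Lean document; each statement's English description precedes it below -/
import Mathlib

section
/- Let A be a commutative ring, M an A-module, and f an A-linear endomorphism of M. Then for every m ∈ M, the formal power series ∑_{i≥0} ι(f^i m) t^i (an element of (⋀M)[[t]], where f^0 = id) squares to zero; consequently, by the universal property of the exterior algebra, there exists a unique A-algebra homomorphism D(t) : ⋀M → (⋀M)[[t]] satisfying D(t)(ι m) = ∑_{i≥0} ι(f^i m) t^i for all m ∈ M. -/
open ExteriorAlgebra

/- The square of `∑ xᵢ tⁱ` has `n`-th coefficient `∑_{i+j=n} xᵢ xⱼ`; swapping `i` and `j` pairs off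
the terms with `i ≠ j` into anticommutators, and the diagonal term `x_{n/2}²` vanishes. -/
theorem PowerSeries.mk_mul_self_eq_zero {R : Type*} [Ring R] (x : ℕ → R)
    (anticomm : ∀ i j, x i * x j + x j * x i = 0) (sq : ∀ i, x i * x i = 0) :
    PowerSeries.mk x * PowerSeries.mk x = 0 := by
  ext n
  rw [PowerSeries.coeff_mul, map_zero]
  simp only [PowerSeries.coeff_mk]
  refine Finset.sum_involution (fun p _ => p.swap) ?pair ?fixed ?mem ?invol
  case pair =>
    rintro ⟨i, j⟩ -
    rcases eq_or_ne i j with rfl | _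
    · simp [sq]
    · exact anticomm i j
  case fixed =>
    rintro ⟨i, j⟩ - hne heq
    obtain rfl : j = i := congrArg Prod.fst heq
    exact hne (sq j)
  case mem =>
    rintro ⟨i, j⟩ hij
    simpa [add_comm] using hij
  case invol => exact fun p _ => p.swap_swap

theorem ExteriorAlgebra.mk_ι_mul_self_eq_zero {A M : Type*} [CommRing A] [AddCommGroup M]
    [Module A M] (v : ℕ → M) :
    (PowerSeries.mk fun i => ι A (v i)) * PowerSeries.mk (fun i => ι A (v i)) = 0 :=
  PowerSeries.mk_mul_self_eq_zero _ (fun i j => ι_add_mul_swap (v i) (v j)) (fun _ => ι_sq_zero _)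

def ExteriorAlgebra.iterateSeries {A M : Type*} [CommRing A] [AddCommGroup M] [Module A M]
    (f : Module.End A M) : M →ₗ[A] PowerSeries (ExteriorAlgebra A M) where
  toFun m := PowerSeries.mk fun i => ι A ((f ^ i) m)
  map_add' x y := by ext; simp
  map_smul' c x := by ext; simp

theorem stmt_0 (A : Type*) [CommRing A] (M : Type*) [AddCommGroup M] [Module A M]
    (f : Module.End A M) :
    (∀ m : M,
      (PowerSeries.mk fun i => ι A ((f ^ i) m) : PowerSeries (ExteriorAlgebra A M)) *
        PowerSeries.mk (fun i => ι A ((f ^ i) m)) = 0) ∧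
    ∃! D : ExteriorAlgebra A M →ₐ[A] PowerSeries (ExteriorAlgebra A M),
      ∀ m : M, D (ι A m) = PowerSeries.mk fun i => ι A ((f ^ i) m) := by
  have sq_zero : ∀ m, iterateSeries f m * iterateSeries f m = 0 := fun m =>
    mk_ι_mul_self_eq_zero fun i => (f ^ i) m
  refine ⟨sq_zero, lift A ⟨iterateSeries f, sq_zero⟩, lift_ι_apply A _ sq_zero, fun D hD => ?_⟩
  exact (lift_unique A _ sq_zero D).mp (LinearMap.ext hD)
end

section
/- For every n ≥ 0 and every u ∈ ⋀M, ∑_{i+j=n} D_i(c_j(u)) equals u if n = 0 and equals 0 if n > 0, and likewise ∑_{i+j=n} c_i(D_j(u)) equals u if n = 0 and equals 0 if n > 0. In other words, the Hasse–Schmidt derivations D(t) and D̄(t), viewed as elements of (End_A(⋀M))[[t]] via their coefficient maps, are mutually inverse. -/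
/-!
Extending a Hasse–Schmidt-type map `E : R → R⟦t⟧` `t`-linearly to `R⟦t⟧` (substitute `t` for the
outer variable of `R⟦t⟧⟦t⟧`) gives an algebra endomorphism of `R⟦t⟧`, and the convolution
`∑_{i+j=n} Eᵢ ∘ E'ⱼ` is the `n`-th coefficient of `(extend E) ∘ E'`. So both identities say that a
composite of algebra homomorphisms `⋀M → (⋀M)⟦t⟧` is the constant embedding, which it suffices to
check on `ι m`. There it is `(1 - f t)⁻¹` against `1 - f t`: for `a j = ι (fʲ m)` both composites
give `∑ aⱼ tʲ - (∑ aⱼ₊₁ tʲ) t = a₀`.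
-/

open ExteriorAlgebra PowerSeries Finset

namespace PowerSeries

section Semiring

variable {R : Type*} [Semiring R]

theorem sum_antidiagonal_coeff_coeff_C (g : R⟦X⟧) (n : ℕ) :
    ∑ p ∈ antidiagonal n, coeff p.1 (coeff p.2 (C g)) = coeff n g := by
  rw [sum_eq_single (n, 0)]
  · simp
  · rintro ⟨i, j⟩ hij hne
    have hj : j ≠ 0 := by rintro rfl; simp_all
    simp [coeff_C, hj]
  · simp

/-- The substitution `Y ↦ X` from `R⟦X⟧⟦Y⟧` to `R⟦X⟧`, the outer variable being `Y`. -/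
noncomputable def diagonal : R⟦X⟧⟦X⟧ →+* R⟦X⟧ where
  toFun G := mk fun n ↦ ∑ p ∈ antidiagonal n, coeff p.1 (coeff p.2 G)
  map_zero' := by ext; simp
  map_add' G H := by ext; simp [sum_add_distrib]
  map_one' := by ext n; rw [coeff_mk, ← map_one C, sum_antidiagonal_coeff_coeff_C]
  map_mul' G H := by
    ext n
    simp only [coeff_mk, coeff_mul, map_sum, sum_mul, mul_sum, sum_sigma']
    -- both sides sum `coeff a Gₖ * coeff b Hₗ` over `a + b + k + l = n`, grouped differently
    exact sum_nbij'
      (fun x ↦ ⟨(x.2.2.1 + x.2.1.1, x.2.2.2 + x.2.1.2), (x.2.2.2, x.2.1.2), (x.2.2.1, x.2.1.1)⟩)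
      (fun x ↦ ⟨(x.2.2.1 + x.2.1.1, x.2.2.2 + x.2.1.2), (x.2.2.2, x.2.1.2), (x.2.2.1, x.2.1.1)⟩)
      (by intro x; simp; omega) (by intro x; simp; omega) (by aesop) (by aesop) (by simp)

theorem coeff_diagonal (G : R⟦X⟧⟦X⟧) (n : ℕ) :
    coeff n (diagonal G) = ∑ p ∈ antidiagonal n, coeff p.1 (coeff p.2 G) := by
  simp only [diagonal, RingHom.coe_mk, MonoidHom.coe_mk, OneHom.coe_mk, coeff_mk]

theorem diagonal_C (g : R⟦X⟧) : diagonal (C g) = g := by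
  ext n; rw [coeff_diagonal, sum_antidiagonal_coeff_coeff_C]

theorem diagonal_map_C (g : R⟦X⟧) : diagonal (map C g) = g := by
  ext n
  rw [coeff_diagonal, sum_eq_single (0, n)]
  · simp [coeff_map]
  · rintro ⟨i, j⟩ hij hne
    have hi : i ≠ 0 := by rintro rfl; simp_all
    simp [coeff_map, coeff_C, hi]
  · simp

theorem diagonal_X : diagonal (X : R⟦X⟧⟦X⟧) = X := by
  rw [← map_X C, diagonal_map_C]

variable {A : Type*} [CommSemiring A] [Algebra A R]

noncomputable def constAlgHom : R →ₐ[A] R⟦X⟧ :=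
  { C with commutes' := fun _ ↦ algebraMap_apply.symm }

noncomputable def diagonalAlgHom : R⟦X⟧⟦X⟧ →ₐ[A] R⟦X⟧ :=
  { diagonal with
    commutes' := fun a ↦ by
      change diagonal _ = _
      rw [algebraMap_apply, diagonal_C] }

/-- `∑ gⱼ tʲ ↦ ∑ E(gⱼ) tʲ`. -/
noncomputable def extend (E : R →ₐ[A] R⟦X⟧) : R⟦X⟧ →ₐ[A] R⟦X⟧ :=
  diagonalAlgHom.comp (mapAlgHom E)

theorem coeff_extend (E : R →ₐ[A] R⟦X⟧) (g : R⟦X⟧) (n : ℕ) :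
    coeff n (extend E g) = ∑ p ∈ antidiagonal n, coeff p.1 (E (coeff p.2 g)) := by
  simp [extend, diagonalAlgHom, mapAlgHom_apply, coeff_diagonal, coeff_map]

theorem extend_C (E : R →ₐ[A] R⟦X⟧) (r : R) : extend E (C r) = E r := by
  simp [extend, diagonalAlgHom, mapAlgHom_apply, diagonal_C]

theorem extend_X (E : R →ₐ[A] R⟦X⟧) : extend E X = X := by
  simp [extend, diagonalAlgHom, mapAlgHom_apply, diagonal_X]

theorem sum_antidiagonal_coeff_eq_ite_of_extend_comp {E E' : R →ₐ[A] R⟦X⟧}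
    (h : (extend E).comp E' = constAlgHom) (n : ℕ) (u : R) :
    ∑ p ∈ antidiagonal n, coeff p.1 (E (coeff p.2 (E' u))) = if n = 0 then u else 0 := by
  rw [← coeff_extend, ← AlgHom.comp_apply, h]
  exact coeff_C n u

end Semiring

section Ring

variable {R : Type*} [Ring R]

theorem mk_sub_mk_succ_mul_X (a : ℕ → R) : mk a - mk (fun j ↦ a (j + 1)) * X = C (a 0) := by
  ext (_ | n) <;> simp [coeff_succ_mul_X, coeff_C]

theorem extend_mk {A : Type*} [CommSemiring A] [Algebra A R] (E : R →ₐ[A] R⟦X⟧)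
    (a b : ℕ → R) (h : ∀ j, E (a j) = C (a j) - C (b j) * X) :
    extend E (mk a) = mk a - mk b * X := by
  have : map (E : R →+* R⟦X⟧) (mk a) = map C (mk a) - map C (mk b) * C X := by
    ext1 j
    simp [coeff_map, coeff_mul_C, h]
  simp [extend, diagonalAlgHom, mapAlgHom_apply, this, diagonal_map_C, diagonal_C]

end Ring

end PowerSeries

namespace ExteriorAlgebra

variable {A M : Type*} [CommRing A] [AddCommGroup M] [Module A M] {f : Module.End A M}
  {D Dbar : ExteriorAlgebra A M →ₐ[A] (ExteriorAlgebra A M)⟦X⟧}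

theorem extend_geometric_comp_linear
    (hD : ∀ m : M, D (ι A m) = mk fun i ↦ ι A ((f ^ i) m))
    (hDbar : ∀ m : M, Dbar (ι A m) = C (ι A m) - C (ι A (f m)) * X) :
    (extend D).comp Dbar = constAlgHom := by
  refine ExteriorAlgebra.hom_ext (LinearMap.ext fun m ↦ ?_)
  simp only [LinearMap.comp_apply, AlgHom.toLinearMap_apply, AlgHom.comp_apply]
  rw [hDbar, map_sub, map_mul, extend_C, extend_C, extend_X, hD, hD]
  simp only [← Module.End.mul_apply, ← pow_succ]
  exact mk_sub_mk_succ_mul_X _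

theorem extend_linear_comp_geometric
    (hD : ∀ m : M, D (ι A m) = mk fun i ↦ ι A ((f ^ i) m))
    (hDbar : ∀ m : M, Dbar (ι A m) = C (ι A m) - C (ι A (f m)) * X) :
    (extend Dbar).comp D = constAlgHom := by
  refine ExteriorAlgebra.hom_ext (LinearMap.ext fun m ↦ ?_)
  simp only [LinearMap.comp_apply, AlgHom.toLinearMap_apply, AlgHom.comp_apply]
  rw [hD, extend_mk Dbar _ _ fun j ↦ hDbar _]
  simp only [← Module.End.mul_apply, ← pow_succ']
  exact mk_sub_mk_succ_mul_X _

end ExteriorAlgebra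

theorem stmt_1 (A : Type*) [CommRing A] (M : Type*) [AddCommGroup M] [Module A M]
    (f : Module.End A M)
    (D Dbar : ExteriorAlgebra A M →ₐ[A] PowerSeries (ExteriorAlgebra A M))
    (hD : ∀ m : M, D (ι A m) = PowerSeries.mk fun i => ι A ((f ^ i) m))
    (hDbar : ∀ m : M,
      Dbar (ι A m) = PowerSeries.C (ι A m) - PowerSeries.C (ι A (f m)) * PowerSeries.X) :
    ∀ n : ℕ, ∀ u : ExteriorAlgebra A M,
      (∑ p ∈ Finset.HasAntidiagonal.antidiagonal n,
          PowerSeries.coeff p.1 (D (PowerSeries.coeff p.2 (Dbar u)))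
        = if n = 0 then u else 0) ∧
      (∑ p ∈ Finset.HasAntidiagonal.antidiagonal n,
          PowerSeries.coeff p.1 (Dbar (PowerSeries.coeff p.2 (D u)))
        = if n = 0 then u else 0) := by
  intro n u
  exact ⟨sum_antidiagonal_coeff_eq_ite_of_extend_comp (extend_geometric_comp_linear hD hDbar) n u,
    sum_antidiagonal_coeff_eq_ite_of_extend_comp (extend_linear_comp_geometric hD hDbar) n u⟩
end

section
/- The inverse of an invertible Hasse–Schmidt derivation is a Hasse–Schmidt derivation: if (𝒟_i)_{i≥0} is an HS-derivation on ⋀M and (ℰ_j)_{j≥0} is a family of A-linear maps on ⋀M such that for every n ≥ 0 both ∑_{i+j=n} 𝒟_i ∘ ℰ_j and ∑_{i+j=n} ℰ_i ∘ 𝒟_j equal the identity when n = 0 and the zero map when n > 0, then (ℰ_j)_{j≥0} is also an HS-derivation, i.e. ℰ_n(u ∧ v) = ∑_{p+q=n} ℰ_p(u) ∧ ℰ_q(v) for all u, v ∈ ⋀M and all n ≥ 0. -/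
/-!
Extend a family `D = (Dᵢ)` of additive maps on a ring `R` to `R⟦X⟧` by
`D̃ (∑ fₖ Xᵏ) = ∑ₙ (∑_{i+k=n} Dᵢ fₖ) Xⁿ`. This is the unique additive `X`-linear map with
`D̃ (C u) = ∑ Dᵢ(u) Xⁱ`, so the Leibniz rule for `D` makes `D̃` multiplicative, and the two
convolution identities make `D̃` and `Ẽ` mutually inverse. Hence `Ẽ`, the inverse of a ring
automorphism, is multiplicative, which on constants is the Leibniz rule for `E`.
-/

open PowerSeries Finset

namespace PowerSeries

variable {R S : Type*} [Semiring R] [Semiring S]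

theorem addMonoidHom_ext_of_map_X_mul {Φ Ψ : R⟦X⟧ →+ S⟦X⟧}
    (hΦ : ∀ f, Φ (X * f) = X * Φ f) (hΨ : ∀ f, Ψ (X * f) = X * Ψ f)
    (hC : ∀ a, Φ (C a) = Ψ (C a)) : Φ = Ψ := by
  ext f n
  induction n generalizing f with
  | zero => rw [eq_X_mul_shift_add_const f]; simp [hΦ, hΨ, hC]
  | succ n ih => rw [eq_X_mul_shift_add_const f]; simp [hΦ, hΨ, hC, coeff_succ_X_mul, ih]

end PowerSeries

namespace HasseSchmidt

variable {R F : Type*} [Semiring R] [FunLike F R R]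

def IsHSDerivation (D : ℕ → F) : Prop :=
  ∀ n u v, D n (u * v) = ∑ p ∈ antidiagonal n, D p.1 u * D p.2 v

noncomputable def series (D : ℕ → F) (u : R) : R⟦X⟧ := mk fun n => D n u

theorem isHSDerivation_iff_series_mul {D : ℕ → F} :
    IsHSDerivation D ↔ ∀ u v, series D (u * v) = series D u * series D v := by
  simp only [IsHSDerivation, series, PowerSeries.ext_iff, coeff_mul, coeff_mk]
  exact ⟨fun h u v n => h n u v, fun h n u v => h u v n⟩

variable [AddMonoidHomClass F R R]

noncomputable def extend (D : ℕ → F) : R⟦X⟧ →+ R⟦X⟧ where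
  toFun f := mk fun n => ∑ p ∈ antidiagonal n, D p.1 (coeff p.2 f)
  map_zero' := by ext; simp
  map_add' f g := by ext; simp [sum_add_distrib]

theorem coeff_extend (D : ℕ → F) (f : R⟦X⟧) (n : ℕ) :
    coeff n (extend D f) = ∑ p ∈ antidiagonal n, D p.1 (coeff p.2 f) :=
  coeff_mk n (fun n => ∑ p ∈ antidiagonal n, D p.1 (coeff p.2 f))

theorem extend_C (D : ℕ → F) (u : R) : extend D (C u) = series D u := by
  ext n
  rw [coeff_extend, series, coeff_mk, sum_eq_single_of_mem (n, 0) (by simp)]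
  · simp
  · rintro ⟨i, k⟩ hp hne
    have hk : k ≠ 0 := by rintro rfl; simp_all
    simp [coeff_C, hk]

theorem extend_X_mul (D : ℕ → F) (f : R⟦X⟧) : extend D (X * f) = X * extend D f := by
  ext (_ | n)
  · simp [coeff_extend]
  · simp [coeff_extend, coeff_succ_X_mul, Nat.sum_antidiagonal_succ']

theorem extend_series {D E : ℕ → F}
    (hDE : ∀ n u, ∑ p ∈ antidiagonal n, D p.1 (E p.2 u) = if n = 0 then u else 0) (u : R) :
    extend D (series E u) = C u := by
  ext n
  simp [coeff_extend, series, hDE, coeff_C]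

theorem extend_extend {D E : ℕ → F}
    (hDE : ∀ n u, ∑ p ∈ antidiagonal n, D p.1 (E p.2 u) = if n = 0 then u else 0) (f : R⟦X⟧) :
    extend D (extend E f) = f := by
  have h : (extend D).comp (extend E) = AddMonoidHom.id _ :=
    addMonoidHom_ext_of_map_X_mul (by simp [extend_X_mul]) (by simp)
      (by simp [extend_C, extend_series hDE])
  exact DFunLike.congr_fun h f

theorem IsHSDerivation.extend_mul {D : ℕ → F} (hD : IsHSDerivation D) (f g : R⟦X⟧) :
    extend D (f * g) = extend D f * extend D g := by
  have h_mulRight (b : R) : (extend D).comp (AddMonoidHom.mulRight (C b)) =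
      (AddMonoidHom.mulRight (series D b)).comp (extend D) :=
    addMonoidHom_ext_of_map_X_mul (by simp [mul_assoc, extend_X_mul])
      (by simp [mul_assoc, extend_X_mul])
      (by simp [← map_mul, extend_C, isHSDerivation_iff_series_mul.1 hD])
  have h_mulLeft : (extend D).comp (AddMonoidHom.mulLeft f) =
      (AddMonoidHom.mulLeft (extend D f)).comp (extend D) :=
    addMonoidHom_ext_of_map_X_mul
      (fun g => by
        simp only [AddMonoidHom.comp_apply, AddMonoidHom.coe_mulLeft]
        rw [← mul_assoc, (commute_X f).eq, mul_assoc, extend_X_mul])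
      (by simp [← mul_assoc, (commute_X _).eq, extend_X_mul])
      (fun b => by simpa [extend_C] using DFunLike.congr_fun (h_mulRight b) f)
  exact DFunLike.congr_fun h_mulLeft g

noncomputable def extendRingEquiv {D E : ℕ → F} (hD : IsHSDerivation D)
    (hDE : ∀ n u, ∑ p ∈ antidiagonal n, D p.1 (E p.2 u) = if n = 0 then u else 0)
    (hED : ∀ n u, ∑ p ∈ antidiagonal n, E p.1 (D p.2 u) = if n = 0 then u else 0) :
    R⟦X⟧ ≃+* R⟦X⟧ where
  toFun := extend D
  invFun := extend E
  left_inv := extend_extend hED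
  right_inv := extend_extend hDE
  map_mul' := hD.extend_mul
  map_add' := map_add _

end HasseSchmidt

theorem stmt_5 (A : Type*) [CommRing A] (M : Type*) [AddCommGroup M] [Module A M]
    (D E : ℕ → ExteriorAlgebra A M →ₗ[A] ExteriorAlgebra A M)
    (hD : ∀ (i : ℕ) (u v : ExteriorAlgebra A M),
      D i (u * v) = ∑ p ∈ Finset.HasAntidiagonal.antidiagonal i, D p.1 u * D p.2 v)
    (hDE : ∀ (n : ℕ) (u : ExteriorAlgebra A M),
      ∑ p ∈ Finset.HasAntidiagonal.antidiagonal n, D p.1 (E p.2 u) = if n = 0 then u else 0)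
    (hED : ∀ (n : ℕ) (u : ExteriorAlgebra A M),
      ∑ p ∈ Finset.HasAntidiagonal.antidiagonal n, E p.1 (D p.2 u) = if n = 0 then u else 0) :
    ∀ (n : ℕ) (u v : ExteriorAlgebra A M),
      E n (u * v) = ∑ p ∈ Finset.HasAntidiagonal.antidiagonal n, E p.1 u * E p.2 v := by
  let Φ := HasseSchmidt.extendRingEquiv hD hDE hED
  have hΦ (u : ExteriorAlgebra A M) : Φ.symm (C u) = HasseSchmidt.series E u :=
    HasseSchmidt.extend_C E u
  refine HasseSchmidt.isHSDerivation_iff_series_mul.2 fun u v => ?_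
  rw [← hΦ, ← hΦ, ← hΦ, map_mul, map_mul]
end

section
/- (Integration by parts.) Let (𝒟_i)_{i≥0} be an HS-derivation on ⋀M and (ℰ_j)_{j≥0} its inverse, i.e. for every n ≥ 0 both ∑_{i+j=n} 𝒟_i ∘ ℰ_j and ∑_{i+j=n} ℰ_i ∘ 𝒟_j equal the identity when n = 0 and the zero map otherwise. Then for all u, v ∈ ⋀M and all k ≥ 0: 𝒟_k(u) ∧ v = ∑_{i+j=k} 𝒟_i(u ∧ ℰ_j(v)) and u ∧ ℰ_k(v) = ∑_{i+j=k} ℰ_i(𝒟_j(u) ∧ v). -/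
/-!
Both identities are coefficientwise forms of integration by parts for the series
`𝒟(t) = ∑ 𝒟ᵢ tⁱ` and its inverse `ℰ(t)`. Inserting `1 = 𝒟(t) ℰ(t)` in front of `v` and using that
`𝒟(t)` is multiplicative gives `𝒟(t) u ∧ v = 𝒟(t) (u ∧ ℰ(t) v)`. Applying `ℰ(t)` to this identity and
using `ℰ(t) 𝒟(t) = 1` gives the second one. On coefficients, each step is a reindexing of a sum
over `a + b + c = k`.
-/

open Finset

theorem Finset.Nat.sum_antidiagonal_assoc {X : Type*} [AddCommMonoid X] (k : ℕ)
    (f : ℕ → ℕ → ℕ → X) :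
    ∑ p ∈ antidiagonal k, ∑ q ∈ antidiagonal p.1, f q.1 q.2 p.2 =
      ∑ p ∈ antidiagonal k, ∑ q ∈ antidiagonal p.2, f p.1 q.1 q.2 := by
  simp only [sum_sigma']
  apply sum_nbij' (fun ⟨⟨_, c⟩, ⟨a, b⟩⟩ ↦ ⟨(a, b + c), (b, c)⟩)
    (fun ⟨⟨a, _⟩, ⟨b, c⟩⟩ ↦ ⟨(a + b, c), (a, b)⟩) <;> aesop (add simp [add_assoc])

theorem Finset.Nat.sum_antidiagonal_ite_fst_eq_zero {X : Type*} [AddCommMonoid X] (k : ℕ)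
    (g : ℕ × ℕ → X) : ∑ p ∈ antidiagonal k, (if p.1 = 0 then g p else 0) = g (0, k) := by
  rw [← sum_filter, HasAntidiagonal.filter_fst_eq_antidiagonal k 0]
  simp

theorem Finset.Nat.sum_antidiagonal_ite_snd_eq_zero {X : Type*} [AddCommMonoid X] (k : ℕ)
    (g : ℕ × ℕ → X) : ∑ p ∈ antidiagonal k, (if p.2 = 0 then g p else 0) = g (k, 0) := by
  rw [← sum_filter, HasAntidiagonal.filter_snd_eq_antidiagonal k 0]
  simp

section IntegrationByParts

variable {B F : Type*} [NonUnitalNonAssocSemiring B] [FunLike F B B] {D E : ℕ → F}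

theorem apply_mul_eq_sum_apply_mul_apply
    (hD : ∀ i u v, D i (u * v) = ∑ p ∈ antidiagonal i, D p.1 u * D p.2 v)
    (hDE : ∀ n u, ∑ p ∈ antidiagonal n, D p.1 (E p.2 u) = if n = 0 then u else 0)
    (k : ℕ) (u v : B) :
    D k u * v = ∑ p ∈ antidiagonal k, D p.1 (u * E p.2 v) :=
  calc D k u * v
      = ∑ p ∈ antidiagonal k, D p.1 u * if p.2 = 0 then v else 0 := by
        simp only [mul_ite, mul_zero, Nat.sum_antidiagonal_ite_snd_eq_zero]
    _ = ∑ p ∈ antidiagonal k, ∑ q ∈ antidiagonal p.2, D p.1 u * D q.1 (E q.2 v) := by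
        simp only [← mul_sum, hDE]
    _ = ∑ p ∈ antidiagonal k, ∑ q ∈ antidiagonal p.1, D q.1 u * D q.2 (E p.2 v) :=
        (Nat.sum_antidiagonal_assoc k fun a b c ↦ D a u * D b (E c v)).symm
    _ = ∑ p ∈ antidiagonal k, D p.1 (u * E p.2 v) := by simp only [hD]

theorem mul_apply_eq_sum_apply_apply_mul [AddMonoidHomClass F B B]
    (hD : ∀ i u v, D i (u * v) = ∑ p ∈ antidiagonal i, D p.1 u * D p.2 v)
    (hDE : ∀ n u, ∑ p ∈ antidiagonal n, D p.1 (E p.2 u) = if n = 0 then u else 0)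
    (hED : ∀ n u, ∑ p ∈ antidiagonal n, E p.1 (D p.2 u) = if n = 0 then u else 0)
    (k : ℕ) (u v : B) :
    u * E k v = ∑ p ∈ antidiagonal k, E p.1 (D p.2 u * v) :=
  calc u * E k v
      = ∑ p ∈ antidiagonal k, if p.1 = 0 then u * E p.2 v else 0 :=
        (Nat.sum_antidiagonal_ite_fst_eq_zero k fun p ↦ u * E p.2 v).symm
    _ = ∑ p ∈ antidiagonal k, ∑ q ∈ antidiagonal p.1, E q.1 (D q.2 (u * E p.2 v)) := by
        simp only [hED]
    _ = ∑ p ∈ antidiagonal k, ∑ q ∈ antidiagonal p.2, E p.1 (D q.1 (u * E q.2 v)) :=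
        Nat.sum_antidiagonal_assoc k fun a b c ↦ E a (D b (u * E c v))
    _ = ∑ p ∈ antidiagonal k, E p.1 (D p.2 u * v) := by
        simp only [← map_sum, ← apply_mul_eq_sum_apply_mul_apply hD hDE]

end IntegrationByParts

theorem stmt_6 (A : Type*) [CommRing A] (M : Type*) [AddCommGroup M] [Module A M]
    (D E : ℕ → ExteriorAlgebra A M →ₗ[A] ExteriorAlgebra A M)
    (hD : ∀ (i : ℕ) (u v : ExteriorAlgebra A M),
      D i (u * v) = ∑ p ∈ Finset.HasAntidiagonal.antidiagonal i, D p.1 u * D p.2 v)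
    (hDE : ∀ (n : ℕ) (u : ExteriorAlgebra A M),
      ∑ p ∈ Finset.HasAntidiagonal.antidiagonal n, D p.1 (E p.2 u) = if n = 0 then u else 0)
    (hED : ∀ (n : ℕ) (u : ExteriorAlgebra A M),
      ∑ p ∈ Finset.HasAntidiagonal.antidiagonal n, E p.1 (D p.2 u) = if n = 0 then u else 0) :
    ∀ (k : ℕ) (u v : ExteriorAlgebra A M),
      D k u * v = ∑ p ∈ Finset.HasAntidiagonal.antidiagonal k, D p.1 (u * E p.2 v) ∧
      u * E k v = ∑ p ∈ Finset.HasAntidiagonal.antidiagonal k, E p.1 (D p.2 u * v) :=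
  fun k u v ↦ ⟨apply_mul_eq_sum_apply_mul_apply hD hDE k u v,
    mul_apply_eq_sum_apply_apply_mul hD hDE hED k u v⟩
end

section
/- For any A-linear endomorphism f of M and any integers k > j ≥ 0, the coefficient map c_k of the Hasse–Schmidt derivation D̄(t) vanishes on the j-th exterior power: c_k(u) = 0 for every u ∈ ⋀^j M. (Equivalently, the restriction of D̄(t) to ⋀^j M is a polynomial in t of degree at most j.) -/
/-!
Restricted to `⋀^j M = (range ι) ^ j`, the algebra map `D̄(t)` lands in the power series of degree
at most `j`: these form a filtration of `(⋀M)[[t]]` (degrees add under multiplication), and the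
generators `ι m` are sent to `ι m − ι (f m) t`, of degree at most one.
-/

open ExteriorAlgebra

namespace PowerSeries

section Semiring

variable (A : Type*) {R : Type*} [CommSemiring A] [Semiring R] [Algebra A R]

def degreeLE (n : ℕ) : Submodule A R⟦X⟧ where
  carrier := {φ | ∀ k, n < k → coeff k φ = 0}
  add_mem' hφ hψ k hk := by rw [map_add, hφ k hk, hψ k hk, add_zero]
  zero_mem' k _ := map_zero _
  smul_mem' a φ hφ k hk := by rw [coeff_smul, hφ k hk, smul_zero]

variable {A}

theorem one_le_degreeLE_zero : (1 : Submodule A R⟦X⟧) ≤ degreeLE A 0 :=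
  Submodule.one_le.mpr fun k hk => by rw [coeff_one, if_neg hk.ne']

theorem degreeLE_mul_le (m n : ℕ) :
    degreeLE A m * degreeLE A n ≤ (degreeLE A (m + n) : Submodule A R⟦X⟧) := by
  refine Submodule.mul_le.mpr fun φ hφ ψ hψ k hk => ?_
  rw [coeff_mul]
  refine Finset.sum_eq_zero fun ij hij => ?_
  rw [Finset.HasAntidiagonal.mem_antidiagonal] at hij
  rcases lt_or_ge m ij.1 with hi | hi
  · rw [hφ _ hi, zero_mul]
  · rw [hψ _ (by omega), mul_zero]

theorem pow_le_degreeLE {P : Submodule A R⟦X⟧} (hP : P ≤ degreeLE A 1) :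
    ∀ j : ℕ, P ^ j ≤ degreeLE A j
  | 0 => by rw [pow_zero]; exact one_le_degreeLE_zero
  | j + 1 => by
    rw [pow_succ]
    exact (mul_le_mul' (pow_le_degreeLE hP j) hP).trans (degreeLE_mul_le j 1)

end Semiring

theorem C_sub_C_mul_X_mem_degreeLE_one {A R : Type*} [CommSemiring A] [Ring R] [Algebra A R]
    (a b : R) : C a - C b * X ∈ degreeLE A 1 := by
  intro k hk
  rw [map_sub, coeff_C, ← pow_one X, coeff_C_mul_X_pow, if_neg (by omega), if_neg (by omega),
    sub_zero]

end PowerSeries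

theorem stmt_7 (A : Type*) [CommRing A] (M : Type*) [AddCommGroup M] [Module A M]
    (f : Module.End A M)
    (Dbar : ExteriorAlgebra A M →ₐ[A] PowerSeries (ExteriorAlgebra A M))
    (hDbar : ∀ m : M,
      Dbar (ι A m) = PowerSeries.C (ι A m) - PowerSeries.C (ι A (f m)) * PowerSeries.X) :
    ∀ k j : ℕ, j < k →
      ∀ u ∈ (LinearMap.range (ι A : M →ₗ[A] ExteriorAlgebra A M)) ^ j,
        PowerSeries.coeff k (Dbar u) = 0 := by
  intro k j hjk u hu
  have hgen : (LinearMap.range (ι A)).map Dbar.toLinearMap ≤ PowerSeries.degreeLE A 1 := by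
    rintro _ ⟨_, ⟨m, rfl⟩, rfl⟩
    exact hDbar m ▸ PowerSeries.C_sub_C_mul_X_mem_degreeLE_one _ _
  have hu' : Dbar u ∈ (LinearMap.range (ι A)).map Dbar.toLinearMap ^ j :=
    Submodule.map_pow _ Dbar j ▸ Submodule.mem_map_of_mem hu
  exact PowerSeries.pow_le_degreeLE hgen j hu' k hjk
end

section
/- The Hasse–Schmidt derivation D̄(t) acts on the top exterior power by multiplication by det(id − f t): for every i with 0 ≤ i ≤ r, c_i(ι b_1 ∧ ι b_2 ∧ ⋯ ∧ ι b_r) = (−1)^i e_i • (ι b_1 ∧ ι b_2 ∧ ⋯ ∧ ι b_r), and c_i vanishes on ι b_1 ∧ ⋯ ∧ ι b_r for i > r. -/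
/-!
Over `A[t]` the map `m ↦ D̄(t)(ι m)` is `ι` composed with the matrix `1 - t·f` in the basis `b`,
and the images `ι b_j` anticommute and square to zero. Multiplying out
`D̄(t)(ι b_1 ∧ ⋯ ∧ ι b_r)` is therefore evaluating an alternating map on the columns of `1 - t·f`,
which yields `det (1 - t·f) • (ι b_1 ∧ ⋯ ∧ ι b_r)`. The coefficients of `det (1 - t·f)`, the
reverse of the characteristic polynomial, are the `(-1)^i e_i`.
-/

open ExteriorAlgebra Polynomial

open Equiv in
theorem AlternatingMap.map_sum_smul_eq_det_smul {R N P ι : Type*} [CommRing R]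
    [AddCommGroup N] [Module R N] [AddCommGroup P] [Module R P] [Fintype ι] [DecidableEq ι]
    (g : N [⋀^ι]→ₗ[R] P) (v : ι → N) (B : Matrix ι ι R) :
    g (fun k => ∑ j, B j k • v j) = B.det • g v := by
  have expand : g (fun k => ∑ j, B j k • v j) = ∑ σ : ι → ι, (∏ k, B (σ k) k) • g (v ∘ σ) := by
    rw [← g.coe_multilinearMap, MultilinearMap.map_sum]
    exact Finset.sum_congr rfl fun σ _ => MultilinearMap.map_smul_univ _ _ _
  have only_perms : ∑ σ : ι → ι, (∏ k, B (σ k) k) • g (v ∘ σ) =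
      ∑ σ : Perm ι, (∏ k, B (σ k) k) • g (v ∘ σ) := by
    refine (Fintype.sum_of_injective (fun σ : Perm ι => ⇑σ) DFunLike.coe_injective _ _
      (fun σ hσ => ?_) fun _ => rfl).symm
    have hσ : ¬ Function.Injective σ := fun h =>
      hσ ⟨Equiv.ofBijective σ h.bijective_of_finite, rfl⟩
    rw [g.map_eq_zero_of_not_injective _ fun h => hσ h.of_comp, smul_zero]
  rw [expand, only_perms, Matrix.det_apply', Finset.sum_smul]
  refine Finset.sum_congr rfl fun σ _ => ?_
  rw [g.map_perm, mul_comm, mul_smul, Units.smul_def, Int.cast_smul_eq_zsmul]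

section SquareZero

variable {R S : Type*} [CommRing R] [Ring S] [Algebra R S]

theorem sum_smul_mul_self_eq_zero {ι : Type*} [Fintype ι] {u : ι → S}
    (hsq : ∀ j, u j * u j = 0) (hanti : ∀ j k, u j * u k + u k * u j = 0) (w : ι → R) :
    (∑ j, w j • u j) * (∑ j, w j • u j) = 0 := by
  rw [Finset.sum_mul_sum, ← Finset.sum_product']
  refine Finset.sum_involution (fun p _ => p.swap) (fun p _ => ?_) (fun p _ hp hswap => ?_)
    (fun _ _ => Finset.mem_univ _) (fun _ _ => rfl)
  · rw [smul_mul_smul_comm, smul_mul_smul_comm, Prod.fst_swap, Prod.snd_swap,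
      mul_comm (w p.2), ← smul_add, hanti, smul_zero]
  · rw [show p.2 = p.1 from congrArg Prod.fst hswap, smul_mul_smul_comm, hsq, smul_zero] at hp
    exact absurd rfl hp

/-- The `u j` generate a quotient of an exterior algebra, so `k ↦ ∑ j, B j k • u j` multiplies out
through an alternating map. -/
theorem prod_ofFn_sum_smul_eq_det_smul {r : ℕ} {u : Fin r → S} (hsq : ∀ j, u j * u j = 0)
    (hanti : ∀ j k, u j * u k + u k * u j = 0) (B : Matrix (Fin r) (Fin r) R) :
    (List.ofFn fun k => ∑ j, B j k • u j).prod = B.det • (List.ofFn u).prod := by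
  let F := Fintype.linearCombination R u
  have hF : ∀ w, F w * F w = 0 := sum_smul_mul_self_eq_zero hsq hanti
  let g := (lift R ⟨F, hF⟩).toLinearMap.compAlternatingMap (ιMulti R r)
  have hg : ∀ w, g w = (List.ofFn fun k => F (w k)).prod := fun w => by
    simp [g, ιMulti_apply, map_list_prod, List.map_ofFn, Function.comp_def]
  simpa [hg, F, Fintype.linearCombination_apply, Pi.single_apply] using
    g.map_sum_smul_eq_det_smul (Pi.basisFun R (Fin r)) B

end SquareZero

section PowerSeries

variable {A E : Type*} [CommRing A] [Ring E] [Algebra A E]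

theorem Polynomial.coeToPowerSeries_algHom_X :
    coeToPowerSeries.algHom E (X : A[X]) = PowerSeries.X := by
  rw [coeToPowerSeries.algHom_apply, coe_X, PowerSeries.map_X]

theorem Polynomial.commute_coeToPowerSeries_algHom (p : A[X]) (q : PowerSeries E) :
    Commute (coeToPowerSeries.algHom E p) q := by
  induction p using Polynomial.induction_on' with
  | add p p' hp hp' => rw [map_add]; exact hp.add_left hp'
  | monomial n a =>
    rw [← C_mul_X_pow_eq_monomial, ← algebraMap_eq, map_mul, map_pow, AlgHom.commutes,
      coeToPowerSeries_algHom_X]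
    exact (Algebra.commute_algebraMap_left a q).mul_left (q.commute_X_pow n).symm

/-- Unlike `PowerSeries.algebraPolynomial`, this needs no commutativity of `E`: polynomials over
`A` are central in `E⟦X⟧`. -/
noncomputable abbrev Polynomial.algebraPowerSeries : Algebra A[X] (PowerSeries E) :=
  (coeToPowerSeries.algHom E).toRingHom.toAlgebra' fun p q =>
    (commute_coeToPowerSeries_algHom p q).eq

end PowerSeries

theorem Matrix.coeff_charpolyRev_of_charpoly_eq {A n : Type*} [CommRing A] [Fintype n]
    [DecidableEq n] (M : Matrix n n A) {e : ℕ → A}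
    (hM : M.charpoly = ∑ i ∈ Finset.range (Fintype.card n + 1),
      (-1 : A[X]) ^ i * C (e i) * X ^ (Fintype.card n - i)) (i : ℕ) :
    M.charpolyRev.coeff i = if i ≤ Fintype.card n then (-1) ^ i * e i else 0 := by
  nontriviality A
  have hterm : ∀ j, (-1 : A[X]) ^ j * C (e j) = C ((-1) ^ j * e j) := by simp
  rw [← reverse_charpoly, coeff_reverse, charpoly_natDegree_eq_dim, hM, finsetSum_coeff]
  simp only [hterm, coeff_C_mul_X_pow]
  split_ifs with hi
  · have hi' : i ∈ Finset.range (Fintype.card n + 1) := Finset.mem_range.mpr (by omega)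
    rw [revAt_le hi, Finset.sum_eq_single_of_mem i hi' fun j hj hji => if_neg ?_, if_pos rfl]
    simp only [Finset.mem_range] at hj
    omega
  · rw [revAt_eq_self_of_lt (not_le.mp hi)]
    exact Finset.sum_eq_zero fun j _ => if_neg (by omega)

theorem map_prod_ofFn_ι_basis_eq_charpolyRev_mul {A M : Type*} [CommRing A] [AddCommGroup M]
    [Module A M] {r : ℕ} (b : Module.Basis (Fin r) A M) (f : Module.End A M)
    (D : ExteriorAlgebra A M →ₐ[A] PowerSeries (ExteriorAlgebra A M))
    (hD : ∀ m, D (ι A m) = PowerSeries.C (ι A m) - PowerSeries.C (ι A (f m)) * PowerSeries.X) :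
    D (List.ofFn fun k => ι A (b k)).prod =
      coeToPowerSeries.algHom _ (LinearMap.toMatrix b b f).charpolyRev *
        PowerSeries.C (List.ofFn fun k => ι A (b k)).prod := by
  let _ := Polynomial.algebraPowerSeries (A := A) (E := ExteriorAlgebra A M)
  have hsmul : ∀ (p : A[X]) (q : PowerSeries (ExteriorAlgebra A M)),
      p • q = coeToPowerSeries.algHom _ p * q := fun _ _ => rfl
  set a := LinearMap.toMatrix b b f
  set u : Fin r → PowerSeries (ExteriorAlgebra A M) := fun k => PowerSeries.C (ι A (b k))
  have hsq : ∀ j, u j * u j = 0 := fun j => by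
    rw [← map_mul PowerSeries.C, ι_sq_zero, map_zero]
  have hanti : ∀ j k, u j * u k + u k * u j = 0 := fun j k => by
    rw [← map_mul PowerSeries.C, ← map_mul PowerSeries.C, ← map_add PowerSeries.C,
      ι_add_mul_swap, map_zero]
  have hterm : ∀ j k, ((X : A[X]) • a.map C) j k • u j =
      PowerSeries.C (ι A (a j k • b j)) * PowerSeries.X := fun j k => by
    rw [Matrix.smul_apply, Matrix.map_apply, smul_eq_mul, hsmul, map_mul, ← algebraMap_eq,
      AlgHom.commutes, coeToPowerSeries_algHom_X, PowerSeries.algebraMap_apply, mul_assoc,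
      ← map_mul PowerSeries.C, ← Algebra.smul_def, ← map_smul]
    exact (PowerSeries.commute_X _).eq.symm
  have hfactor : ∀ k, D (ι A (b k)) = ∑ j, (1 - (X : A[X]) • a.map C) j k • u j := fun k => by
    simp only [Matrix.sub_apply, sub_smul, Finset.sum_sub_distrib, Matrix.one_apply, ite_smul,
      one_smul, zero_smul, Finset.sum_ite_eq', Finset.mem_univ, if_true, hterm]
    rw [hD, ← Finset.sum_mul, ← map_sum, ← map_sum, ← Matrix.toLin_self b b a k,
      Matrix.toLin_toMatrix]
  rw [map_list_prod, List.map_ofFn, Function.comp_def]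
  simp only [hfactor]
  rw [prod_ofFn_sum_smul_eq_det_smul hsq hanti, hsmul, map_list_prod, List.map_ofFn,
    Function.comp_def, Matrix.charpolyRev]

theorem stmt_8_general (A : Type*) [CommRing A] (M : Type*) [AddCommGroup M] [Module A M]
    (r : ℕ) (b : Module.Basis (Fin r) A M) (f : Module.End A M)
    (e : ℕ → A)
    (hchar : (LinearMap.toMatrix b b f).charpoly =
      ∑ i ∈ Finset.range (r + 1), (-1 : Polynomial A) ^ i * Polynomial.C (e i) * Polynomial.X ^ (r - i))
    (Dbar : ExteriorAlgebra A M →ₐ[A] PowerSeries (ExteriorAlgebra A M))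
    (hDbar : ∀ m : M,
      Dbar (ι A m) = PowerSeries.C (ι A m) - PowerSeries.C (ι A (f m)) * PowerSeries.X) :
    (∀ i : ℕ, i ≤ r →
      PowerSeries.coeff i (Dbar (List.ofFn fun k : Fin r => ι A (b k)).prod) =
        ((-1 : A) ^ i * e i) • (List.ofFn fun k : Fin r => ι A (b k)).prod) ∧
    (∀ i : ℕ, r < i →
      PowerSeries.coeff i (Dbar (List.ofFn fun k : Fin r => ι A (b k)).prod) = 0) := by
  have hcoeff := (LinearMap.toMatrix b b f).coeff_charpolyRev_of_charpoly_eq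
    (by rwa [Fintype.card_fin])
  simp only [map_prod_ofFn_ι_basis_eq_charpolyRev_mul b f Dbar hDbar, PowerSeries.coeff_mul_C,
    coeToPowerSeries.algHom_apply, PowerSeries.coeff_map, coeff_coe, ← Algebra.smul_def, hcoeff,
    Fintype.card_fin]
  exact ⟨fun i hi => by rw [if_pos hi], fun i hi => by rw [if_neg (not_le.mpr hi), zero_smul]⟩

theorem stmt_8 (A : Type*) [CommRing A] (M : Type*) [AddCommGroup M] [Module A M]
    (r : ℕ) (hr : 1 ≤ r) (b : Module.Basis (Fin r) A M) (f : Module.End A M)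
    (e : ℕ → A) (he0 : e 0 = 1)
    (hchar : (LinearMap.toMatrix b b f).charpoly =
      ∑ i ∈ Finset.range (r + 1), (-1 : Polynomial A) ^ i * Polynomial.C (e i) * Polynomial.X ^ (r - i))
    (Dbar : ExteriorAlgebra A M →ₐ[A] PowerSeries (ExteriorAlgebra A M))
    (hDbar : ∀ m : M,
      Dbar (ι A m) = PowerSeries.C (ι A m) - PowerSeries.C (ι A (f m)) * PowerSeries.X) :
    (∀ i : ℕ, i ≤ r →
      PowerSeries.coeff i (Dbar (List.ofFn fun k : Fin r => ι A (b k)).prod) =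
        ((-1 : A) ^ i * e i) • (List.ofFn fun k : Fin r => ι A (b k)).prod) ∧
    (∀ i : ℕ, r < i →
      PowerSeries.coeff i (Dbar (List.ofFn fun k : Fin r => ι A (b k)).prod) = 0) :=
  stmt_8_general A M r b f e hchar Dbar hDbar
end

section
/- The Hasse–Schmidt derivation D(t) acts on the top exterior power by multiplication by the formal inverse of det(id − f t): for every j ≥ 0, D_j(ι b_1 ∧ ι b_2 ∧ ⋯ ∧ ι b_r) = h_j • (ι b_1 ∧ ι b_2 ∧ ⋯ ∧ ι b_r), where the elements h_j ∈ A are defined recursively by h_0 = 1 and h_j = ∑_{i=1}^{min(j,r)} (−1)^{i+1} e_i h_{j−i} for j ≥ 1 (so that ∑_{j≥0} h_j t^j is the multiplicative inverse in A[[t]] of ∑_{i=0}^r (−1)^i e_i t^i). -/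
/-!
Since `D` is multiplicative, `D (ι b₁ ∧ ⋯ ∧ ι bᵣ)` is the wedge of the series `∑ᵢ ι (fⁱ bₖ) tⁱ`;
expanding coefficientwise, its `j`-th coefficient is the `j`-th coefficient of `det (∑ᵢ Fⁱ tⁱ)`
times the top form, where `F` is the matrix of `f`. The matrix series `∑ᵢ Fⁱ tⁱ` inverts
`1 - t F`, so its determinant inverts `det (1 - t F) = ∑ᵢ (-1)ⁱ eᵢ tⁱ` (the reversed
characteristic polynomial), and the recursion for `h` says exactly that `∑ⱼ hⱼ tʲ` inverts
the same series.
-/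

open Finset ExteriorAlgebra

theorem PowerSeries.coeff_ofFn_prod {S : Type*} [Semiring S] :
    ∀ (n : ℕ) (φ : Fin n → PowerSeries S) (j : ℕ),
    coeff j (List.ofFn φ).prod
      = ∑ l ∈ Nat.antidiagonalTuple n j, (List.ofFn fun k => coeff (l k) (φ k)).prod
  | 0, φ, j => by cases j <;> simp [coeff_one]
  | n+1, φ, j => by
    simp_rw [List.ofFn_succ, List.prod_cons, coeff_mul, coeff_ofFn_prod n, mul_sum]
    rw [sum_sigma']
    refine sum_nbij' (fun x => Fin.cons x.1.1 x.2)
      (fun l => ⟨(l 0, ∑ k : Fin n, l k.succ), Fin.tail l⟩) ?_ ?_ ?_ ?_ ?_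
    · rintro ⟨⟨p, q⟩, l⟩ hx
      simp_all [Nat.mem_antidiagonalTuple, Fin.sum_cons]
    · intro l hl
      simp_all [Nat.mem_antidiagonalTuple, Fin.sum_univ_succ, Fin.tail]
    · rintro ⟨⟨p, q⟩, l⟩ hx
      simp_all [Nat.mem_antidiagonalTuple]
    · intro l _
      exact Fin.cons_self_tail l
    · rintro ⟨⟨p, q⟩, l⟩ _
      simp

theorem AlternatingMap.eq_smulRight_basis_det {R M N ι : Type*} [CommRing R] [AddCommGroup M]
    [Module R M] [AddCommGroup N] [Module R N] [Fintype ι] [DecidableEq ι]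
    (e : Module.Basis ι R M) (g : M [⋀^ι]→ₗ[R] N) : g = e.det.smulRight (g e) := by
  refine e.ext_alternating fun i h => ?_
  let σ : Equiv.Perm ι := Equiv.ofBijective i (Finite.injective_iff_bijective.1 h)
  change g (e ∘ σ) = (e.det.smulRight (g e)) (e ∘ σ)
  simp [AlternatingMap.map_perm, Module.Basis.det_self, Units.smul_def]

theorem ExteriorAlgebra.ofFn_prod_ι_eq_basis_det_smul {R M : Type*} [CommRing R] [AddCommGroup M]
    [Module R M] {n : ℕ} (e : Module.Basis (Fin n) R M) (v : Fin n → M) :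
    (List.ofFn fun k => ι R (v k)).prod = e.det v • (List.ofFn fun k => ι R (e k)).prod := by
  simp_rw [← ιMulti_apply]
  conv_lhs => rw [(ιMulti R n).eq_smulRight_basis_det e]
  rfl

namespace Matrix

variable {n A : Type*} [Fintype n] [DecidableEq n] [CommRing A]

noncomputable def geomSeries (F : Matrix n n A) : Matrix n n (PowerSeries A) :=
  of fun p q => PowerSeries.mk fun i => (F ^ i) p q

theorem one_sub_X_smul_mul_geomSeries (F : Matrix n n A) :
    (1 - (PowerSeries.X : PowerSeries A) • F.map PowerSeries.C) * F.geomSeries = 1 := by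
  ext p q : 1
  refine PowerSeries.ext fun j => ?_
  rw [sub_mul, one_mul, smul_mul, sub_apply, smul_apply, smul_eq_mul, map_sub]
  cases j with
  | zero => by_cases hpq : p = q <;> simp [geomSeries, one_apply, hpq]
  | succ j =>
    simp [geomSeries, PowerSeries.coeff_succ_X_mul, PowerSeries.coeff_one, mul_apply, pow_succ',
      one_apply, apply_ite]

theorem charpolyRev_mul_det_geomSeries (F : Matrix n n A) :
    (F.charpolyRev : PowerSeries A) * F.geomSeries.det = 1 := by
  have hcoe : (F.charpolyRev : PowerSeries A) =
      (1 - (PowerSeries.X : PowerSeries A) • F.map PowerSeries.C).det := by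
    rw [charpolyRev, ← Polynomial.coeToPowerSeries.ringHom_apply, RingHom.map_det, map_sub, map_one]
    congr 2
    ext p q : 1
    simp [PowerSeries.X_mul]
  rw [hcoe, ← det_mul, one_sub_X_smul_mul_geomSeries, det_one]

theorem coeff_det_geomSeries {r : ℕ} (F : Matrix (Fin r) (Fin r) A) (j : ℕ) :
    PowerSeries.coeff j F.geomSeries.det =
      ∑ l ∈ Nat.antidiagonalTuple r j, (of fun p k => (F ^ l k) p k).det := by
  simp_rw [det_apply, map_sum, ← List.prod_ofFn]
  rw [sum_comm]
  refine sum_congr rfl fun σ _ => ?_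
  simp_rw [Units.smul_def, map_zsmul, PowerSeries.coeff_ofFn_prod, smul_sum]
  simp [geomSeries]

theorem charpolyRev_eq_of_charpoly_eq {r : ℕ} {F : Matrix (Fin r) (Fin r) A} {e : ℕ → A}
    (hchar : F.charpoly =
      ∑ i ∈ range (r + 1), (-1 : Polynomial A) ^ i * Polynomial.C (e i) * Polynomial.X ^ (r - i)) :
    F.charpolyRev = ∑ i ∈ range (r + 1), Polynomial.C ((-1) ^ i * e i) * Polynomial.X ^ i := by
  nontriviality A
  let reflectHom : Polynomial A →+ Polynomial A :=
    AddMonoidHom.mk' (Polynomial.reflect r) fun f g => Polynomial.reflect_add f g r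
  rw [← reverse_charpoly, Polynomial.reverse, charpoly_natDegree_eq_dim, Fintype.card_fin, hchar,
    show Polynomial.reflect r = reflectHom from rfl, map_sum]
  refine sum_congr rfl fun i hi => ?_
  have hC : (-1 : Polynomial A) ^ i * Polynomial.C (e i) = Polynomial.C ((-1) ^ i * e i) := by
    simp
  rw [AddMonoidHom.mk'_apply, hC, Polynomial.reflect_C_mul_X_pow,
    Polynomial.revAt_le (Nat.sub_le r i), Nat.sub_sub_self (mem_range_succ_iff.mp hi)]

end Matrix

theorem PowerSeries.mul_mk_eq_one_of_rec {A : Type*} [CommRing A] {r : ℕ} {e h : ℕ → A}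
    (he0 : e 0 = 1) (hh0 : h 0 = 1)
    (hhrec : ∀ j : ℕ, 1 ≤ j →
      h j = ∑ i ∈ Icc 1 (min j r), (-1 : A) ^ (i + 1) * e i * h (j - i)) :
    ((∑ i ∈ range (r + 1), Polynomial.C ((-1) ^ i * e i) * Polynomial.X ^ i : Polynomial A) :
      PowerSeries A) * mk h = 1 := by
  rw [← Polynomial.coeToPowerSeries.ringHom_apply, map_sum]
  simp only [Polynomial.coeToPowerSeries.ringHom_apply, Polynomial.coe_mul, Polynomial.coe_pow,
    Polynomial.coe_C, Polynomial.coe_X]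
  ext j
  have hrange : (range (r + 1)).filter (· ≤ j) = range (min j r + 1) := by
    ext i; simp only [mem_filter, mem_range]; omega
  simp_rw [sum_mul, map_sum, mul_assoc, coeff_C_mul, coeff_X_pow_mul', coeff_mk, mul_ite, mul_zero,
    ← sum_filter, hrange, coeff_one]
  rcases Nat.eq_zero_or_pos j with rfl | hj
  · simp [he0, hh0]
  rw [range_eq_Ico, sum_eq_sum_Ico_succ_bot (Nat.add_one_pos _), zero_add, Ico_add_one_right_eq_Icc]
  simp only [pow_zero, he0, one_mul, Nat.sub_zero]
  rw [hhrec j hj, if_neg hj.ne', ← sum_add_distrib]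
  exact sum_eq_zero fun i _ => by ring

theorem ExteriorAlgebra.coeff_map_ofFn_prod_ι_basis {A M : Type*} [CommRing A] [AddCommGroup M]
    [Module A M] {r : ℕ} (b : Module.Basis (Fin r) A M) (f : Module.End A M)
    (D : ExteriorAlgebra A M →ₐ[A] PowerSeries (ExteriorAlgebra A M))
    (hD : ∀ m : M, D (ι A m) = PowerSeries.mk fun i => ι A ((f ^ i) m)) (j : ℕ) :
    PowerSeries.coeff j (D (List.ofFn fun k => ι A (b k)).prod) =
      PowerSeries.coeff j (LinearMap.toMatrix b b f).geomSeries.det •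
        (List.ofFn fun k => ι A (b k)).prod := by
  rw [map_list_prod, List.map_ofFn, Function.comp_def]
  simp_rw [hD, PowerSeries.coeff_ofFn_prod, PowerSeries.coeff_mk, Matrix.coeff_det_geomSeries,
    sum_smul]
  refine sum_congr rfl fun l _ => ?_
  rw [ofFn_prod_ι_eq_basis_det_smul b]
  congr 2
  rw [Module.Basis.det_apply]
  congr 1
  ext p k
  rw [Module.Basis.toMatrix_apply, Matrix.of_apply, ← LinearMap.toMatrix_apply, LinearMap.toMatrix_pow]

theorem stmt_9_general (A : Type*) [CommRing A] (M : Type*) [AddCommGroup M] [Module A M]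
    (r : ℕ) (b : Module.Basis (Fin r) A M) (f : Module.End A M)
    (e : ℕ → A) (he0 : e 0 = 1)
    (hchar : (LinearMap.toMatrix b b f).charpoly =
      ∑ i ∈ Finset.range (r + 1), (-1 : Polynomial A) ^ i * Polynomial.C (e i) * Polynomial.X ^ (r - i))
    (h : ℕ → A) (hh0 : h 0 = 1)
    (hhrec : ∀ j : ℕ, 1 ≤ j →
      h j = ∑ i ∈ Finset.Icc 1 (min j r), (-1 : A) ^ (i + 1) * e i * h (j - i))
    (D : ExteriorAlgebra A M →ₐ[A] PowerSeries (ExteriorAlgebra A M))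
    (hD : ∀ m : M, D (ι A m) = PowerSeries.mk fun i => ι A ((f ^ i) m)) :
    ∀ j : ℕ,
      PowerSeries.coeff j (D (List.ofFn fun k : Fin r => ι A (b k)).prod) =
        h j • (List.ofFn fun k : Fin r => ι A (b k)).prod := by
  set F := LinearMap.toMatrix b b f
  have hdet : F.charpolyRev * F.geomSeries.det = 1 := F.charpolyRev_mul_det_geomSeries
  have hh : F.charpolyRev * PowerSeries.mk h = 1 := by
    rw [Matrix.charpolyRev_eq_of_charpoly_eq hchar]
    exact PowerSeries.mul_mk_eq_one_of_rec he0 hh0 hhrec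
  have hdet_eq : F.geomSeries.det = PowerSeries.mk h :=
    left_inv_eq_right_inv ((mul_comm _ _).trans hdet) hh
  intro j
  rw [coeff_map_ofFn_prod_ι_basis b f D hD, hdet_eq, PowerSeries.coeff_mk]

theorem stmt_9 (A : Type*) [CommRing A] (M : Type*) [AddCommGroup M] [Module A M]
    (r : ℕ) (hr : 1 ≤ r) (b : Module.Basis (Fin r) A M) (f : Module.End A M)
    (e : ℕ → A) (he0 : e 0 = 1)
    (hchar : (LinearMap.toMatrix b b f).charpoly =
      ∑ i ∈ Finset.range (r + 1), (-1 : Polynomial A) ^ i * Polynomial.C (e i) * Polynomial.X ^ (r - i))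
    (h : ℕ → A) (hh0 : h 0 = 1)
    (hhrec : ∀ j : ℕ, 1 ≤ j →
      h j = ∑ i ∈ Finset.Icc 1 (min j r), (-1 : A) ^ (i + 1) * e i * h (j - i))
    (D : ExteriorAlgebra A M →ₐ[A] PowerSeries (ExteriorAlgebra A M))
    (hD : ∀ m : M, D (ι A m) = PowerSeries.mk fun i => ι A ((f ^ i) m)) :
    ∀ j : ℕ,
      PowerSeries.coeff j (D (List.ofFn fun k : Fin r => ι A (b k)).prod) =
        h j • (List.ofFn fun k : Fin r => ι A (b k)).prod :=
  stmt_9_general A M r b f e he0 hchar h hh0 hhrec D hD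
end

section
/- Fix r ≥ 1. For every n ∈ ℕ and every η ∈ ⋀^{r−1}V, one has ∑_{k=0}^{r} c_k( ι(σ^{r−k} b_n) ∧ η ) = 0. (This is the linear recurrence b_{n+r} − e_1 b_{n+r−1} + ⋯ + (−1)^r e_r b_n = 0 expressing that V, with the multiplication by e_1, …, e_r induced through the top exterior power, is generated over ℚ[e_1,…,e_r] by b_0, …, b_{r−1}.) -/
/-!
Since `σ̄(t) (ι m ∧ η) = (ι m - ι (σ m) t) σ̄(t) η`, the `k`-th summand is `T k - T (k - 1)` with
`T k = ι (σ^(r-k) m) ∧ c_k η` (and `T (-1) = 0`), so the sum telescopes to `ι m ∧ c_r η`.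
This vanishes because `σ̄(t)` maps `⋀^p V` to polynomials of degree at most `p`, and `r - 1 < r`.
-/

open ExteriorAlgebra

namespace PowerSeries

variable {B : Type*} [Ring B]

theorem coeff_eq_zero_of_mem_pow {R A : Type*} [CommRing R] [Ring A] [Algebra R A]
    [Algebra R B] (S : A →ₐ[R] B⟦X⟧) (V : Submodule R A)
    (hV : ∀ v ∈ V, ∀ j, 1 < j → coeff j (S v) = 0) {p : ℕ} {a : A} (ha : a ∈ V ^ p) :
    ∀ j, p < j → coeff j (S a) = 0 := by
  induction ha using Submodule.pow_induction_on_left' with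
  | algebraMap c =>
    intro j hj
    rw [AlgHom.commutes, algebraMap_apply, coeff_C, if_neg (by omega)]
  | add x y i _ _ ihx ihy =>
    intro j hj
    rw [map_add, map_add, ihx j hj, ihy j hj, add_zero]
  | mem_mul v hv i x _ ih =>
    intro j hj
    rw [map_mul, coeff_mul]
    refine Finset.sum_eq_zero fun ⟨k, l⟩ hkl => ?_
    rw [Finset.HasAntidiagonal.mem_antidiagonal] at hkl
    dsimp only
    rcases lt_or_ge 1 k with hk | hk
    · rw [hV v hv k hk, zero_mul]
    · rw [ih l (by omega), mul_zero]

theorem sum_range_coeff_C_sub_C_mul_X_mul (f : B⟦X⟧) (u v : ℕ → B) (n : ℕ)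
    (huv : ∀ k < n, v (k + 1) = u k) :
    ∑ k ∈ Finset.range (n + 1), coeff k ((C (u k) - C (v k) * X) * f) = u n * coeff n f := by
  induction n with
  | zero => simp [sub_mul, mul_assoc]
  | succ n ih =>
    rw [Finset.sum_range_succ, ih fun k hk => huv k (by omega), sub_mul, map_sub, mul_assoc,
      coeff_C_mul, coeff_C_mul, coeff_succ_X_mul, huv n n.lt_succ_self, add_sub_cancel]

end PowerSeries

open PowerSeries in
theorem ExteriorAlgebra.sum_coeff_ι_pow_mul_eq_zero {R M : Type*} [CommRing R]
    [AddCommGroup M] [Module R M] (σ : Module.End R M)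
    (S : ExteriorAlgebra R M →ₐ[R] (ExteriorAlgebra R M)⟦X⟧)
    (hS : ∀ m, S (ι R m) = C (ι R m) - C (ι R (σ m)) * X) {r : ℕ} (hr : 1 ≤ r) (m : M)
    {η : ExteriorAlgebra R M} (hη : η ∈ LinearMap.range (ι R : M →ₗ[R] _) ^ (r - 1)) :
    ∑ k ∈ Finset.range (r + 1), coeff k (S (ι R ((σ ^ (r - k)) m) * η)) = 0 := by
  have hι : ∀ v ∈ LinearMap.range (ι R : M →ₗ[R] _), ∀ j, 1 < j → coeff j (S v) = 0 := by
    rintro _ ⟨w, rfl⟩ j hj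
    obtain ⟨j, rfl⟩ : ∃ i, j = i + 1 := ⟨j - 1, by omega⟩
    simp [hS, coeff_C, coeff_succ_mul_X, show j ≠ 0 by omega]
  have hσ : ∀ k < r, σ ((σ ^ (r - (k + 1))) m) = (σ ^ (r - k)) m := fun k hk => by
    rw [← Module.End.mul_apply, ← pow_succ', show r - (k + 1) + 1 = r - k by omega]
  simp_rw [map_mul, hS]
  rw [sum_range_coeff_C_sub_C_mul_X_mul (S η) _ _ r fun k hk => by simp only [hσ k hk],
    coeff_eq_zero_of_mem_pow S _ hι hη r (by omega), mul_zero]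

theorem stmt_15_general (r : ℕ) (hr : 1 ≤ r)
    (σ : Module.End ℚ (ℕ →₀ ℚ))
    (S : ExteriorAlgebra ℚ (ℕ →₀ ℚ) →ₐ[ℚ] PowerSeries (ExteriorAlgebra ℚ (ℕ →₀ ℚ)))
    (hS : ∀ m : ℕ →₀ ℚ,
      S (ι ℚ m) = PowerSeries.C (ι ℚ m) - PowerSeries.C (ι ℚ (σ m)) * PowerSeries.X) :
    ∀ n : ℕ,
      ∀ η ∈ (LinearMap.range
          (ι ℚ : (ℕ →₀ ℚ) →ₗ[ℚ] ExteriorAlgebra ℚ (ℕ →₀ ℚ))) ^ (r - 1),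
        ∑ k ∈ Finset.range (r + 1),
          PowerSeries.coeff k (S (ι ℚ ((σ ^ (r - k)) (Finsupp.single n 1)) * η)) = 0 :=
  fun n _ hη => sum_coeff_ι_pow_mul_eq_zero σ S hS hr (Finsupp.single n 1) hη

theorem stmt_15 (r : ℕ) (hr : 1 ≤ r)
    (σ : Module.End ℚ (ℕ →₀ ℚ))
    (hσ : ∀ n : ℕ, σ (Finsupp.single n 1) = Finsupp.single (n + 1) 1)
    (S : ExteriorAlgebra ℚ (ℕ →₀ ℚ) →ₐ[ℚ] PowerSeries (ExteriorAlgebra ℚ (ℕ →₀ ℚ)))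
    (hS : ∀ m : ℕ →₀ ℚ,
      S (ι ℚ m) = PowerSeries.C (ι ℚ m) - PowerSeries.C (ι ℚ (σ m)) * PowerSeries.X) :
    ∀ n : ℕ,
      ∀ η ∈ (LinearMap.range
          (ι ℚ : (ℕ →₀ ℚ) →ₗ[ℚ] ExteriorAlgebra ℚ (ℕ →₀ ℚ))) ^ (r - 1),
        ∑ k ∈ Finset.range (r + 1),
          PowerSeries.coeff k (S (ι ℚ ((σ ^ (r - k)) (Finsupp.single n 1)) * η)) = 0 :=
  stmt_15_general r hr σ S hS
end

section
/- Fix r ≥ 1 and i with 1 ≤ i ≤ r. If m, m′ ∈ V satisfy ι m′ ∧ η = c_i(ι m ∧ η) for all η ∈ ⋀^{r−1}V, then also ι(σ m′) ∧ η = c_i(ι(σ m) ∧ η) for all η ∈ ⋀^{r−1}V. (That is, the shift σ commutes with the multiplication-by-e_i structure induced on V through the top exterior power, so σ is ℚ[e_1,…,e_r]-linear.) -/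
/-!
Write `c n u` for the `n`-th coefficient of `S u`. Comparing coefficients of `t` in
`S (ι m * u) = (ι m - ι (σ m) t) * S u` gives `ι (σ m) * u = ι m * c 1 u - c 1 (ι m * u)`.
Moreover the operators `c n` commute pairwise: `c m (c n u)` is symmetric in `(m, n)` for
`u = ι v`, and this symmetry survives products because `c n` obeys the Leibniz rule
`c n (a * b) = ∑_{p + q = n} c p a * c q b`. Applying the hypothesis to `η` and to `c 1 η`
(which again lies in `⋀^{r-1}`), the claim is `c i` applied to the first identity.
-/

open ExteriorAlgebra PowerSeries

theorem PowerSeries.coeff_algHom_mem_pow {R A : Type*} [CommSemiring R] [Semiring A] [Algebra R A]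
    (S : A →ₐ[R] A⟦X⟧) {N : Submodule R A} (hN : ∀ v ∈ N, ∀ j, coeff j (S v) ∈ N) :
    ∀ (p : ℕ), ∀ u ∈ N ^ p, ∀ j, coeff j (S u) ∈ N ^ p
  | 0, u, hu, j => by
    obtain ⟨r, rfl⟩ := Submodule.mem_one.mp (pow_zero N ▸ hu)
    rw [AlgHom.commutes, PowerSeries.algebraMap_apply, coeff_C]
    split_ifs
    · exact pow_zero N ▸ Submodule.algebraMap_mem r
    · exact zero_mem _
  | p + 1, u, hu, j => by
    rw [pow_succ] at hu ⊢
    refine Submodule.mul_induction_on (C := fun u => ∀ j, coeff j (S u) ∈ N ^ p * N) hu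
      (fun a ha b hb j => ?_) (fun x y hx hy j => ?_) j
    · rw [map_mul, coeff_mul]
      exact Submodule.sum_mem _ fun q _ =>
        Submodule.mul_mem_mul (coeff_algHom_mem_pow S hN p a ha q.1) (hN b hb q.2)
    · rw [map_add, map_add]
      exact add_mem (hx j) (hy j)

section Shift

variable {R M : Type*} [CommRing R] [AddCommGroup M] [Module R M] {σ : Module.End R M}
  {S : ExteriorAlgebra R M →ₐ[R] (ExteriorAlgebra R M)⟦X⟧}

theorem coeff_ι_of_shift (hS : ∀ m, S (ι R m) = C (ι R m) - C (ι R (σ m)) * X) (m : M) (n : ℕ) :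
    coeff n (S (ι R m)) = if n = 0 then ι R m else if n = 1 then -ι R (σ m) else 0 := by
  rcases n with _ | _ | n <;> simp [hS, coeff_C]

theorem coeff_zero_of_shift (hS : ∀ m, S (ι R m) = C (ι R m) - C (ι R (σ m)) * X)
    (u : ExteriorAlgebra R M) : coeff 0 (S u) = u := by
  induction u using ExteriorAlgebra.induction with
  | algebraMap r => rw [AlgHom.commutes, PowerSeries.algebraMap_apply, coeff_zero_C]
  | ι v => simp [coeff_ι_of_shift hS]
  | mul a b ha hb => simp only [coeff_zero_eq_constantCoeff_apply, map_mul] at ha hb ⊢; rw [ha, hb]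
  | add a b ha hb => rw [map_add, map_add, ha, hb]

theorem ι_map_mul_of_shift (hS : ∀ m, S (ι R m) = C (ι R m) - C (ι R (σ m)) * X)
    (m : M) (u : ExteriorAlgebra R M) :
    ι R (σ m) * u = ι R m * coeff 1 (S u) - coeff 1 (S (ι R m * u)) := by
  rw [map_mul, hS, sub_mul, map_sub, coeff_C_mul, mul_assoc, coeff_C_mul, ← zero_add 1,
    coeff_succ_X_mul, coeff_zero_of_shift hS, sub_sub_cancel]

theorem coeff_mem_range_ι_pow_of_shift (hS : ∀ m, S (ι R m) = C (ι R m) - C (ι R (σ m)) * X)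
    (p : ℕ) {u : ExteriorAlgebra R M} (hu : u ∈ LinearMap.range (ι R) ^ p) (j : ℕ) :
    coeff j (S u) ∈ LinearMap.range (ι R : M →ₗ[R] ExteriorAlgebra R M) ^ p := by
  refine coeff_algHom_mem_pow S (fun v hv j => ?_) p u hu j
  obtain ⟨m, rfl⟩ := hv
  rw [coeff_ι_of_shift hS]
  split_ifs
  · exact LinearMap.mem_range_self _ m
  · exact neg_mem (LinearMap.mem_range_self _ _)
  · exact zero_mem _

theorem coeff_coeff_comm_of_shift (hS : ∀ m, S (ι R m) = C (ι R m) - C (ι R (σ m)) * X)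
    (u : ExteriorAlgebra R M) (m n : ℕ) :
    coeff m (S (coeff n (S u))) = coeff n (S (coeff m (S u))) := by
  induction u using ExteriorAlgebra.induction generalizing m n with
  | algebraMap r =>
    rcases n with _ | n <;> rcases m with _ | m <;>
      simp [PowerSeries.algebraMap_apply, coeff_C, -coeff_zero_eq_constantCoeff]
  | ι v =>
    rcases n with _ | _ | n <;> rcases m with _ | _ | m <;>
      simp [coeff_ι_of_shift hS, -coeff_zero_eq_constantCoeff]
  | mul a b ha hb =>
    simp only [map_mul, coeff_mul, map_sum]
    exact Finset.sum_comm.trans <| Finset.sum_congr rfl fun _ _ =>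
      Finset.sum_congr rfl fun _ _ => by rw [ha, hb]
  | add a b ha hb => simp only [map_add, ha, hb]

end Shift

theorem stmt_16_general (r : ℕ) (i : ℕ)
    (σ : Module.End ℚ (ℕ →₀ ℚ))
    (S : ExteriorAlgebra ℚ (ℕ →₀ ℚ) →ₐ[ℚ] PowerSeries (ExteriorAlgebra ℚ (ℕ →₀ ℚ)))
    (hS : ∀ m : ℕ →₀ ℚ,
      S (ι ℚ m) = PowerSeries.C (ι ℚ m) - PowerSeries.C (ι ℚ (σ m)) * PowerSeries.X)
    (m m' : ℕ →₀ ℚ)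
    (h : ∀ η ∈ (LinearMap.range
        (ι ℚ : (ℕ →₀ ℚ) →ₗ[ℚ] ExteriorAlgebra ℚ (ℕ →₀ ℚ))) ^ (r - 1),
      ι ℚ m' * η = PowerSeries.coeff i (S (ι ℚ m * η))) :
    ∀ η ∈ (LinearMap.range
        (ι ℚ : (ℕ →₀ ℚ) →ₗ[ℚ] ExteriorAlgebra ℚ (ℕ →₀ ℚ))) ^ (r - 1),
      ι ℚ (σ m') * η = PowerSeries.coeff i (S (ι ℚ (σ m) * η)) := by
  intro η hη
  rw [ι_map_mul_of_shift hS m' η, ι_map_mul_of_shift hS m η, map_sub, map_sub,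
    h _ (coeff_mem_range_ι_pow_of_shift hS _ hη 1), h η hη, coeff_coeff_comm_of_shift hS _ i 1]

theorem stmt_16 (r : ℕ) (hr : 1 ≤ r) (i : ℕ) (hi1 : 1 ≤ i) (hir : i ≤ r)
    (σ : Module.End ℚ (ℕ →₀ ℚ))
    (hσ : ∀ n : ℕ, σ (Finsupp.single n 1) = Finsupp.single (n + 1) 1)
    (S : ExteriorAlgebra ℚ (ℕ →₀ ℚ) →ₐ[ℚ] PowerSeries (ExteriorAlgebra ℚ (ℕ →₀ ℚ)))
    (hS : ∀ m : ℕ →₀ ℚ,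
      S (ι ℚ m) = PowerSeries.C (ι ℚ m) - PowerSeries.C (ι ℚ (σ m)) * PowerSeries.X)
    (m m' : ℕ →₀ ℚ)
    (h : ∀ η ∈ (LinearMap.range
        (ι ℚ : (ℕ →₀ ℚ) →ₗ[ℚ] ExteriorAlgebra ℚ (ℕ →₀ ℚ))) ^ (r - 1),
      ι ℚ m' * η = PowerSeries.coeff i (S (ι ℚ m * η))) :
    ∀ η ∈ (LinearMap.range
        (ι ℚ : (ℕ →₀ ℚ) →ₗ[ℚ] ExteriorAlgebra ℚ (ℕ →₀ ℚ))) ^ (r - 1),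
      ι ℚ (σ m') * η = PowerSeries.coeff i (S (ι ℚ (σ m) * η)) :=
  stmt_16_general r i σ S hS m m' h
end

section
/- For every n ≥ 1 and every j with 1 ≤ j ≤ n, the following identity holds in the polynomial ring ℤ[x_1, …, x_n]: ∑_{k=0}^{n} (−1)^k e_k(x_1, …, x_n) · h_{n−k}(x_1, …, x_j) = 0, where e_k(x_1,…,x_n) denotes the k-th elementary symmetric polynomial in all n variables (e_0 = 1) and h_m(x_1,…,x_j) denotes the complete homogeneous symmetric polynomial of degree m in the first j variables (h_0 = 1). -/
/-!
With `E(t) = ∏_{i ≤ n} (1 - xᵢ t) = ∑ (-1)ᵏ eₖ tᵏ` and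
`H(t) = ∏_{i ≤ j} (1 - xᵢ t)⁻¹ = ∑ hₘ tᵐ` (the inverse being the geometric series
`rescale xᵢ (mk 1)`), the sum is the coefficient of `tⁿ` in
`E(t) H(t) = ∏_{j < i ≤ n} (1 - xᵢ t)`, a polynomial in `t` of degree `n - j < n`.
-/

open Finset

namespace PowerSeries

variable {R : Type*} [CommRing R]

theorem one_sub_C_mul_X_mul_rescale_mk_one (a : R) : (1 - C a * X) * rescale a (mk 1) = 1 := by
  rw [← rescale_X, ← map_one (rescale a), ← map_sub, ← map_mul, mul_comm,
    mk_one_mul_one_sub_eq_one, map_one]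

theorem coeff_prod_one_add_C_mul_X {ι : Type*} [DecidableEq ι] (c : ι → R) (s : Finset ι)
    (k : ℕ) :
    coeff k (∏ i ∈ s, (1 + C (c i) * X)) = ∑ t ∈ s.powersetCard k, ∏ i ∈ t, c i := by
  have hmonomial (t : Finset ι) : ∏ i ∈ t, C (c i) * X = C (∏ i ∈ t, c i) * X ^ #t := by
    rw [prod_mul_distrib, map_prod, prod_const]
  simp_rw [add_comm (1 : R⟦X⟧), prod_add, prod_const_one, mul_one, map_sum, hmonomial,
    coeff_C_mul, coeff_X_pow, mul_ite, mul_one, mul_zero]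
  rw [powersetCard_eq_filter, sum_filter]
  exact sum_congr rfl fun t _ => if_congr eq_comm rfl rfl

theorem coeff_prod_one_sub_C_mul_X {ι : Type*} [DecidableEq ι] (c : ι → R) (s : Finset ι)
    (k : ℕ) :
    coeff k (∏ i ∈ s, (1 - C (c i) * X)) =
      (-1) ^ k * ∑ t ∈ s.powersetCard k, ∏ i ∈ t, c i := by
  simp_rw [sub_eq_add_neg, ← neg_mul, ← map_neg, coeff_prod_one_add_C_mul_X, mul_sum]
  refine sum_congr rfl fun t ht => ?_
  rw [prod_neg, (mem_powersetCard.mp ht).2]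

theorem coeff_prod_one_sub_C_mul_X_of_card_lt {ι : Type*} [DecidableEq ι] (c : ι → R)
    {s : Finset ι} {k : ℕ} (hk : #s < k) : coeff k (∏ i ∈ s, (1 - C (c i) * X)) = 0 := by
  rw [coeff_prod_one_sub_C_mul_X, powersetCard_eq_empty.mpr hk, sum_empty, mul_zero]

theorem coeff_prod_rescale_mk_one {ι : Type*} [Fintype ι] [DecidableEq ι] (c : ι → R)
    (m : ℕ) :
    coeff m (∏ i, rescale (c i) (mk 1)) = ∑ s : Sym ι m, (s.1.map c).prod := by
  simp only [coeff_prod, coeff_rescale, coeff_mk, Pi.one_apply, mul_one]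
  refine sum_bij' (fun l hl => ⟨Finsupp.toMultiset l, ?_⟩) (fun s _ => Multiset.toFinsupp s.1)
    (fun _ _ => mem_univ _) ?_ (fun l _ => by simp) (fun s _ => by ext1; simp) ?_
  · rw [mem_finsuppAntidiag] at hl
    simpa [Finsupp.card_toMultiset, Finsupp.sum_fintype] using hl.1
  · intro s _
    rw [mem_finsuppAntidiag]
    refine ⟨?_, subset_univ _⟩
    have hsum := (Multiset.toFinsupp_sum_eq s.1).trans s.2
    rwa [Finsupp.sum_fintype _ _ fun _ => rfl] at hsum
  · intro l _
    rw [prod_multiset_map_count, Finsupp.toFinset_toMultiset]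
    simp only [Finsupp.count_toMultiset]
    exact (prod_subset (subset_univ _) fun i _ hi => by
      rw [Finsupp.notMem_support_iff.mp hi, pow_zero]).symm

end PowerSeries

namespace MvPolynomial

variable {σ τ R : Type*} [CommRing R] [Fintype τ] [DecidableEq τ]

theorem coeff_prod_one_sub_X_mul_eq_esymm [Fintype σ] [DecidableEq σ] (k : ℕ) :
    PowerSeries.coeff k
        (∏ i : σ, (1 - PowerSeries.C (X i : MvPolynomial σ R) * PowerSeries.X)) =
      (-1) ^ k * esymm σ R k :=
  PowerSeries.coeff_prod_one_sub_C_mul_X _ _ _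

theorem coeff_prod_rescale_X_mk_one_eq_rename_hsymm (f : τ → σ) (m : ℕ) :
    PowerSeries.coeff m
        (∏ i, PowerSeries.rescale (X (f i) : MvPolynomial σ R) (PowerSeries.mk 1)) =
      rename f (hsymm τ R m) := by
  simp_rw [PowerSeries.coeff_prod_rescale_mk_one, hsymm, map_sum, ← Multiset.prod_hom',
    rename_X]

theorem sum_neg_one_pow_mul_esymm_mul_rename_hsymm [Fintype σ] [DecidableEq σ] {f : τ → σ}
    (hf : Function.Injective f) {m : ℕ} (hm : Fintype.card σ - Fintype.card τ < m) :
    ∑ k ∈ range (m + 1), (-1) ^ k * esymm σ R k * rename f (hsymm τ R (m - k)) = 0 := by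
  set L : σ → PowerSeries (MvPolynomial σ R) := fun i =>
    1 - PowerSeries.C (X i) * PowerSeries.X
  set H := ∏ i, PowerSeries.rescale (X (f i) : MvPolynomial σ R) (PowerSeries.mk 1)
  set A := univ.map ⟨f, hf⟩
  have hinv : (∏ i ∈ A, L i) * H = 1 := by
    rw [prod_map, ← prod_mul_distrib]
    exact prod_eq_one fun i _ => PowerSeries.one_sub_C_mul_X_mul_rescale_mk_one _
  have hcancel : (∏ i, L i) * H = ∏ i ∈ Aᶜ, L i := by
    rw [← prod_mul_prod_compl A, mul_right_comm, hinv, one_mul]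
  have hcard : #Aᶜ < m := by rwa [card_compl, card_map, card_univ]
  calc ∑ k ∈ range (m + 1), (-1) ^ k * esymm σ R k * rename f (hsymm τ R (m - k))
      = PowerSeries.coeff m ((∏ i, L i) * H) := by
        rw [PowerSeries.coeff_mul, Nat.sum_antidiagonal_eq_sum_range_succ
          fun a b => PowerSeries.coeff a (∏ i, L i) * PowerSeries.coeff b H]
        simp only [L, H, coeff_prod_one_sub_X_mul_eq_esymm,
          coeff_prod_rescale_X_mk_one_eq_rename_hsymm]
    _ = 0 := by
      rw [hcancel]
      exact PowerSeries.coeff_prod_one_sub_C_mul_X_of_card_lt _ hcard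

end MvPolynomial

theorem stmt_18_general (n : ℕ) (j : ℕ) (hj1 : 1 ≤ j) (hjn : j ≤ n) :
    ∑ k ∈ Finset.range (n + 1),
      (-1 : MvPolynomial (Fin n) ℤ) ^ k * MvPolynomial.esymm (Fin n) ℤ k *
        MvPolynomial.rename (Fin.castLE hjn) (MvPolynomial.hsymm (Fin j) ℤ (n - k)) = 0 :=
  MvPolynomial.sum_neg_one_pow_mul_esymm_mul_rename_hsymm (Fin.castLE_injective hjn)
    (by simp only [Fintype.card_fin]; omega)

theorem stmt_18 (n : ℕ) (hn : 1 ≤ n) (j : ℕ) (hj1 : 1 ≤ j) (hjn : j ≤ n) :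
    ∑ k ∈ Finset.range (n + 1),
      (-1 : MvPolynomial (Fin n) ℤ) ^ k * MvPolynomial.esymm (Fin n) ℤ k *
        MvPolynomial.rename (Fin.castLE hjn) (MvPolynomial.hsymm (Fin j) ℤ (n - k)) = 0 :=
  stmt_18_general n j hj1 hjn
end
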